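/- Let T be a closed H-triangle of base 1 and height 1 with its horizontal side at height y₀. If T is pointed upwards (its third vertex lies above the horizontal side), then for every t ∈ [0, 1), the sum over all integers n of the 1-dimensional Lebesgue measure of the horizontal slice {x ∈ ℝ : (x, t + n) ∈ T} equals 1 − fract(t − y₀) whenever fract(t − y₀) ≠ 0, and equals 1 when fract(t − y₀) = 0. If T is pointed downwards (its third vertex lies below the horizontal side), then for every t ∈ [0, 1), the sum over all integers n of the 1-dimensional Lebesgue measure of the slice {x ∈ ℝ : (x, t + n) ∈ T and t + n ≠ y₀} equals fract(t − y₀). -/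

import Mathlib

noncomputable section

open MeasureTheory

abbrev Pt : Type := EuclideanSpace ℝ (Fin 2)

/-- The point of the plane with coordinates `(x, y)`. -/
def pt (x y : ℝ) : Pt := WithLp.toLp 2 ![x, y]


lemma Pt.ext' (p q : Pt) (h0 : p 0 = q 0) (h1 : p 1 = q 1) : p = q := by
  ext i
  fin_cases i
  · exact h0
  · exact h1

lemma mem_triangle_iff (A B C p : Pt) :
    p ∈ convexHull ℝ ({A, B, C} : Set Pt) ↔
      ∃ α β γ : ℝ, 0 ≤ α ∧ 0 ≤ β ∧ 0 ≤ γ ∧ α + β + γ = 1 ∧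
        α • A + β • B + γ • C = p := by
  rw [show ({A, B, C} : Set Pt) = insert A {B, C} from rfl,
    convexHull_insert ⟨B, by simp⟩, convexHull_pair, mem_convexJoin]
  constructor
  · rintro ⟨a, ha, b, ⟨u, v, hu, hv, huv, rfl⟩, ⟨σ, τ, hσ, hτ, hστ, rfl⟩⟩
    rcases Set.mem_singleton_iff.mp ha with rfl
    refine ⟨σ, τ * u, τ * v, hσ, by positivity, by positivity, by nlinarith, ?_⟩
    simp [smul_add, smul_smul]
    abel
  · rintro ⟨α, β, γ, hα, hβ, hγ, hsum, rfl⟩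
    rcases eq_or_lt_of_le (by positivity : (0:ℝ) ≤ β + γ) with h | h
    · refine ⟨A, rfl, B, ⟨1, 0, by norm_num⟩, ⟨1, 0, by norm_num, ?_⟩⟩
      have hβ0 : β = 0 := by linarith [hβ, hγ]
      have hγ0 : γ = 0 := by linarith [hβ, hγ]
      simp [hβ0, hγ0, show α = 1 by linarith]
    · refine ⟨A, rfl, (β / (β + γ)) • B + (γ / (β + γ)) • C,
        ⟨β / (β + γ), γ / (β + γ), by positivity, by positivity, by field_simp, rfl⟩,
        ⟨α, β + γ, hα, le_of_lt h, by linarith, ?_⟩⟩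
      rw [smul_add, smul_smul, smul_smul, mul_div_cancel₀ _ (ne_of_gt h),
        mul_div_cancel₀ _ (ne_of_gt h), add_assoc]

lemma slice_eq (A B C : Pt) {y₀ ε : ℝ} (hA : A 1 = y₀) (hB : B 1 = y₀)
    (hC : C 1 = y₀ + ε) (hε : ε * ε = 1) (hbase : |B 0 - A 0| = 1) (y : ℝ) :
    {x : ℝ | pt x y ∈ convexHull ℝ ({A, B, C} : Set Pt)} =
      if 0 ≤ ε * (y - y₀) ∧ ε * (y - y₀) ≤ 1 then
        Set.Icc ((1 - ε * (y - y₀)) * min (A 0) (B 0) + (ε * (y - y₀)) * C 0)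
                ((1 - ε * (y - y₀)) * max (A 0) (B 0) + (ε * (y - y₀)) * C 0)
      else ∅ := by
  set s := ε * (y - y₀) with hs
  have hMm : max (A 0) (B 0) - min (A 0) (B 0) = 1 := by
    rw [max_sub_min_eq_abs]; exact hbase
  ext x
  simp only [Set.mem_setOf_eq, mem_triangle_iff]
  constructor
  · rintro ⟨α, β, γ, hα, hβ, hγ, hsum, hp⟩
    have h1 : α * y₀ + β * y₀ + γ * (y₀ + ε) = y := by
      have := congrFun (congrArg WithLp.ofLp hp) 1
      simp only [pt, WithLp.ofLp_toLp, PiLp.add_apply, PiLp.smul_apply, smul_eq_mul,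
        Matrix.cons_val_one, Matrix.head_cons] at this
      rw [hA, hB, hC] at this
      exact this
    have h0 : α * A 0 + β * B 0 + γ * C 0 = x := by
      have := congrFun (congrArg WithLp.ofLp hp) 0
      simpa [pt, PiLp.add_apply, PiLp.smul_apply, smul_eq_mul] using this
    have hge : γ * ε = y - y₀ := by linear_combination h1 - y₀ * hsum
    have hγs : γ = s := by
      calc γ = (γ * ε) * ε := by rw [mul_assoc, hε, mul_one]
      _ = ε * (y - y₀) := by rw [hge]; ring
    subst hγs
    rw [if_pos ⟨hγ, by linarith⟩]
    have hαm := mul_le_mul_of_nonneg_left (min_le_left (A 0) (B 0)) hα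
    have hβm := mul_le_mul_of_nonneg_left (min_le_right (A 0) (B 0)) hβ
    have hαM := mul_le_mul_of_nonneg_left (le_max_left (A 0) (B 0)) hα
    have hβM := mul_le_mul_of_nonneg_left (le_max_right (A 0) (B 0)) hβ
    have heq1 : (1 - s) * (min (A 0) (B 0)) = α * (min (A 0) (B 0)) + β * (min (A 0) (B 0)) := by
      rw [show (1 - s) = α + β by linarith]; ring
    have heq2 : (1 - s) * (max (A 0) (B 0)) = α * (max (A 0) (B 0)) + β * (max (A 0) (B 0)) := by
      rw [show (1 - s) = α + β by linarith]; ring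
    constructor
    · linarith
    · linarith
  · intro hx
    split_ifs at hx with hcond
    · obtain ⟨h0s, hs1⟩ := hcond
      rcases Set.mem_Icc.mp hx with ⟨hxl, hxr⟩
      set u := x - s * C 0 - (1 - s) * min (A 0) (B 0) with hu
      have hu0 : 0 ≤ u := by simp only [hu]; linarith
      have hu1 : u ≤ 1 - s := by
        have hmm : (1 - s) * max (A 0) (B 0) =
            (1 - s) * min (A 0) (B 0) + (1 - s) := by
          linear_combination (1 - s) * hMm
        simp only [hu]; linarith
      rcases le_total (A 0) (B 0) with hab | hab
      · have hmin : min (A 0) (B 0) = A 0 := min_eq_left hab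
        have hmax : max (A 0) (B 0) = B 0 := max_eq_right hab
        have hBA : B 0 - A 0 = 1 := by rw [hmin, hmax] at hMm; linarith
        have hu' : u = x - s * C 0 - (1 - s) * A 0 := by rw [hu, hmin]
        refine ⟨1 - s - u, u, s, by linarith, hu0, h0s, by ring, ?_⟩
        apply Pt.ext'
        · simp only [pt, WithLp.ofLp_toLp, PiLp.add_apply, PiLp.smul_apply, smul_eq_mul,
            Matrix.cons_val_zero]
          linear_combination u * hBA + hu'
        · simp only [pt, WithLp.ofLp_toLp, PiLp.add_apply, PiLp.smul_apply, smul_eq_mul,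
            Matrix.cons_val_one, Matrix.head_cons, Matrix.cons_val_zero]
          rw [hA, hB, hC]
          linear_combination ε * hs + (y - y₀) * hε
      · have hmin : min (A 0) (B 0) = B 0 := min_eq_right hab
        have hmax : max (A 0) (B 0) = A 0 := max_eq_left hab
        have hAB : A 0 - B 0 = 1 := by rw [hmin, hmax] at hMm; linarith
        have hu' : u = x - s * C 0 - (1 - s) * B 0 := by rw [hu, hmin]
        refine ⟨u, 1 - s - u, s, hu0, by linarith, h0s, by ring, ?_⟩
        apply Pt.ext'
        · simp only [pt, WithLp.ofLp_toLp, PiLp.add_apply, PiLp.smul_apply, smul_eq_mul,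
            Matrix.cons_val_zero]
          linear_combination u * hAB + hu'
        · simp only [pt, WithLp.ofLp_toLp, PiLp.add_apply, PiLp.smul_apply, smul_eq_mul,
            Matrix.cons_val_one, Matrix.head_cons, Matrix.cons_val_zero]
          rw [hA, hB, hC]
          linear_combination ε * hs + (y - y₀) * hε
    · exact absurd hx (Set.notMem_empty x)

lemma slice_vol (A B C : Pt) {y₀ ε : ℝ} (hA : A 1 = y₀) (hB : B 1 = y₀)
    (hC : C 1 = y₀ + ε) (hε : ε * ε = 1) (hbase : |B 0 - A 0| = 1) (y : ℝ) :
    volume {x : ℝ | pt x y ∈ convexHull ℝ ({A, B, C} : Set Pt)} =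
      if 0 ≤ ε * (y - y₀) ∧ ε * (y - y₀) ≤ 1 then
        ENNReal.ofReal (1 - ε * (y - y₀)) else 0 := by
  have hMm : max (A 0) (B 0) - min (A 0) (B 0) = 1 := by
    rw [max_sub_min_eq_abs]; exact hbase
  rw [slice_eq A B C hA hB hC hε hbase y]
  split_ifs with h
  · rw [Real.volume_Icc]
    congr 1
    linear_combination (1 - ε * (y - y₀)) * hMm
  · simp

/-- Let `T` be the closed H-triangle of base 1 and height 1 with vertices `A`, `B`, `C`,
whose horizontal side `AB` lies at height `y₀`.
If `T` is pointed upwards (`C` lies one unit above the horizontal side), then for every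
`t ∈ [0, 1)`, the sum over all integers `n` of the 1-dimensional Lebesgue measure of the
horizontal slice `{x | (x, t + n) ∈ T}` equals `1 - fract (t - y₀)` when `fract (t - y₀) ≠ 0`,
and equals `1` when `fract (t - y₀) = 0`.
If `T` is pointed downwards (`C` lies one unit below the horizontal side), then for every
`t ∈ [0, 1)`, the sum over all integers `n` of the measure of the slice
`{x | (x, t + n) ∈ T ∧ t + n ≠ y₀}` equals `fract (t - y₀)`. -/
theorem statement12 (y₀ : ℝ) (T : Set Pt) (A B C : Pt)
    (hA : A 1 = y₀) (hB : B 1 = y₀) (hbase : |B 0 - A 0| = 1)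
    (hT : T = convexHull ℝ {A, B, C}) :
    (C 1 = y₀ + 1 →
      ∀ t ∈ Set.Ico (0 : ℝ) 1,
        (Int.fract (t - y₀) ≠ 0 →
          ∑' n : ℤ, volume {x : ℝ | pt x (t + n) ∈ T}
            = ENNReal.ofReal (1 - Int.fract (t - y₀))) ∧
        (Int.fract (t - y₀) = 0 →
          ∑' n : ℤ, volume {x : ℝ | pt x (t + n) ∈ T} = 1)) ∧
    (C 1 = y₀ - 1 →
      ∀ t ∈ Set.Ico (0 : ℝ) 1,
        ∑' n : ℤ, volume {x : ℝ | pt x (t + n) ∈ T ∧ t + (n : ℝ) ≠ y₀}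
          = ENNReal.ofReal (Int.fract (t - y₀))) := by
  subst hT
  constructor
  · -- upward
    intro hC t ht
    set f := Int.fract (t - y₀) with hfdef
    have hf0 : 0 ≤ f := Int.fract_nonneg _
    have hf1 : f < 1 := Int.fract_lt_one _
    set k : ℤ := ⌊t - y₀⌋ with hkdef
    have hk : (k : ℝ) + f = t - y₀ := Int.floor_add_fract _
    have key : ∑' n : ℤ, volume {x : ℝ | pt x (t + n) ∈ convexHull ℝ ({A, B, C} : Set Pt)}
        = ENNReal.ofReal (1 - f) := by
      rw [tsum_eq_single (-k) ?_]
      · rw [slice_vol A B C hA hB hC (by norm_num) hbase]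
        rw [if_pos ⟨by push_cast; linarith, by push_cast; linarith⟩]
        congr 1
        push_cast
        linarith
      · intro n hn
        rw [slice_vol A B C hA hB hC (by norm_num) hbase]
        have hnk : t + (n : ℝ) - y₀ = f + ((n + k : ℤ) : ℝ) := by push_cast; linarith
        split_ifs with h
        · obtain ⟨h1, h2⟩ := h
          have hd1 : (-1 : ℝ) < ((n + k : ℤ) : ℝ) := by
            rw [hnk] at h1; simp only [one_mul] at h1; linarith
          have hd2 : (0 : ℤ) ≤ n + k := by
            have : (-1 : ℤ) < n + k := by exact_mod_cast hd1
            omega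
          have hd3 : (1 : ℤ) ≤ n + k := by
            rcases hd2.lt_or_eq with h' | h'
            · omega
            · exfalso; apply hn; omega
          have hd4 : (1 : ℝ) ≤ ((n + k : ℤ) : ℝ) := by exact_mod_cast hd3
          rw [ENNReal.ofReal_eq_zero]
          rw [hnk] at *
          nlinarith
        · rfl
    refine ⟨fun _ => key, fun hf => ?_⟩
    rw [key, hf]
    norm_num
  · -- downward
    intro hC t ht
    set f := Int.fract (t - y₀) with hfdef
    have hf0 : 0 ≤ f := Int.fract_nonneg _
    have hf1 : f < 1 := Int.fract_lt_one _
    set k : ℤ := ⌊t - y₀⌋ with hkdef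
    have hk : (k : ℝ) + f = t - y₀ := Int.floor_add_fract _
    have hC' : C 1 = y₀ + (-1) := by rw [hC]; ring
    rw [tsum_eq_single (-k - 1) ?_]
    · have hy : t + ((-k - 1 : ℤ) : ℝ) ≠ y₀ := by
        push_cast
        intro h
        have : f = 1 := by linarith
        linarith
      have hset : {x : ℝ | pt x (t + ((-k - 1 : ℤ) : ℝ)) ∈ convexHull ℝ ({A, B, C} : Set Pt)
          ∧ t + ((-k - 1 : ℤ) : ℝ) ≠ y₀}
          = {x : ℝ | pt x (t + ((-k - 1 : ℤ) : ℝ)) ∈ convexHull ℝ ({A, B, C} : Set Pt)} := by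
        ext x; exact and_iff_left hy
      rw [hset, slice_vol A B C hA hB hC' (by norm_num) hbase]
      rw [if_pos ⟨by push_cast; linarith, by push_cast; linarith⟩]
      congr 1
      push_cast
      linarith
    · intro n hn
      by_cases hy : t + (n : ℝ) = y₀
      · convert measure_empty
        · ext x; simp [hy]
        · infer_instance
      · have hset : {x : ℝ | pt x (t + (n : ℝ)) ∈ convexHull ℝ ({A, B, C} : Set Pt)
            ∧ t + (n : ℝ) ≠ y₀}
            = {x : ℝ | pt x (t + (n : ℝ)) ∈ convexHull ℝ ({A, B, C} : Set Pt)} := by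
          ext x; exact and_iff_left hy
        rw [hset, slice_vol A B C hA hB hC' (by norm_num) hbase]
        have hnk : t + (n : ℝ) - y₀ = f + ((n + k : ℤ) : ℝ) := by push_cast; linarith
        rw [if_neg ?_]
        rintro ⟨h1, h2⟩
        rw [hnk] at h1 h2
        have hd1 : ((n + k : ℤ) : ℝ) ≤ 0 := by nlinarith
        have hd2 : (-2 : ℝ) < ((n + k : ℤ) : ℝ) := by nlinarith
        have hne : f + ((n + k : ℤ) : ℝ) ≠ 0 := by rw [← hnk]; intro h; exact hy (by linarith)
        have hd3 : (n + k : ℤ) ≤ 0 := by exact_mod_cast hd1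
        have hd4 : (-2 : ℤ) < n + k := by exact_mod_cast hd2
        have hd5 : n + k = -1 ∨ n + k = 0 := by omega
        rcases hd5 with h' | h'
        · exact hn (by omega)
        · have hz : ((n + k : ℤ) : ℝ) = 0 := by rw [h']; simp
          have hfne : f ≠ 0 := by
            intro h0
            exact hy (by linarith [hnk, hz])
          have hfpos : 0 < f := lt_of_le_of_ne hf0 (Ne.symm hfne)
          linarith [h1, hz]
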